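/- If an open list cs of length m is correct up to n (its ground members are exactly 1,…,n) and cs unifies with a list of n distinct variables, then m = n and the unified instance is a list (of length n) whose members are a permutation of 1,…,n. -/

import Mathlib

/-- Terms: variables, number constants, and list constructors. -/
inductive Tm : Type
  | var : ℕ → Tm
  | const : ℕ → Tm
  | nil : Tm
  | cons : Tm → Tm → Tm
deriving DecidableEq

/-- The set of variables of a term. -/
def Tm.vars : Tm → Finset ℕ
  | .var x => {x}
  | .const _ => ∅
  | .nil => ∅
  | .cons s t => s.vars ∪ t.vars

/-- A term is ground if it has no variables. -/
def Tm.Ground (t : Tm) : Prop := t.vars = ∅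

/-- Boolean groundness test. -/
def Tm.groundB : Tm → Bool
  | .var _ => false
  | .const _ => true
  | .nil => true
  | .cons s t => s.groundB && t.groundB

/-- Applying a substitution to a term. -/
def Tm.subst (σ : ℕ → Tm) : Tm → Tm
  | .var x => σ x
  | .const c => .const c
  | .nil => .nil
  | .cons s t => .cons (s.subst σ) (t.subst σ)

/-- The open list `[t₁,…,tₙ|v]` with members `ts` and open-list variable `v`. -/
def mkOpen (ts : List Tm) (v : ℕ) : Tm := ts.foldr .cons (.var v)

/-- The (closed) list `[t₁,…,tₙ]` with members `ts`. -/
def mkList (ts : List Tm) : Tm := ts.foldr .cons .nil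

/-- `(ts, v)` describes a g.v.d. (a linear open list with pairwise distinct
    members, each member ground or a variable). -/
def IsGVD (ts : List Tm) (v : ℕ) : Prop :=
  (∀ t ∈ ts, t.Ground ∨ ∃ x, t = .var x) ∧
  ts.Nodup ∧
  (ts.map Tm.vars).Pairwise Disjoint ∧
  ∀ t ∈ ts, v ∉ t.vars

/-- `θ` unifies `s` and `t`. -/
def IsUnifier (s t : Tm) (θ : ℕ → Tm) : Prop := s.subst θ = t.subst θ

/-- `θ` is a most general unifier of `s` and `t`. -/
def IsMGU (s t : Tm) (θ : ℕ → Tm) : Prop :=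
  IsUnifier s t θ ∧ ∀ σ, IsUnifier s t σ → ∃ δ, ∀ x, σ x = (θ x).subst δ

/-- `s` is the `k`-th member (1-based) of the term `t`,
    i.e. `t = [t₁,…,t_{k-1},s|t₀]`. -/
inductive KthMem : Tm → ℕ → Tm → Prop
  | head (s t : Tm) : KthMem (.cons s t) 1 s
  | tail {t : Tm} {k : ℕ} {s : Tm} (a : Tm) : KthMem t k s → KthMem (.cons a t) (k + 1) s

/-- The open list `cs` represents a correct placement up to row `m`:
    it is a g.v.d., its ground members are exactly the queens `1,…,m`
    (represented as `const j`), and their up diagonal numbers `k + j - i`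
    and down diagonal numbers `k + i - j` (w.r.t. any reference row `i`;
    distinctness does not depend on `i`) are respectively pairwise
    distinct. -/
def CorrectUpTo (cs : Tm) (m : ℕ) : Prop :=
  (∃ ts v, cs = mkOpen ts v ∧ IsGVD ts v) ∧
  (∀ j : ℕ, 1 ≤ j → j ≤ m → ∃ k, KthMem cs k (.const j)) ∧
  (∀ k : ℕ, ∀ s : Tm, KthMem cs k s → s.Ground →
      ∃ j : ℕ, 1 ≤ j ∧ j ≤ m ∧ s = .const j) ∧
  (∀ j j' k k' : ℕ, KthMem cs k (.const j) → KthMem cs k' (.const j') →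
      j ≠ j' → k + j ≠ k' + j' ∧ (k : ℤ) - j ≠ (k' : ℤ) - j')

/-- The pair `(us, ds)` is correct up to `m` w.r.t. the row `i` and `cs`:
    each queen `j ∈ {1,…,m}` is a member of `cs`, and whenever its up
    (resp. down) diagonal number `l` in `cs` w.r.t. `i` is positive, the
    `l`-th member of `us` (resp. `ds`) is `j`. -/
def PairCorrect (us ds : Tm) (m i : ℕ) (cs : Tm) : Prop :=
  ∀ j : ℕ, 1 ≤ j → j ≤ m →
    (∃ k, KthMem cs k (.const j)) ∧
    ∀ k : ℕ, KthMem cs k (.const j) →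
      (∀ l : ℕ, (l : ℤ) = (k : ℤ) + j - i → 0 < l → KthMem us l (.const j)) ∧
      (∀ l : ℕ, (l : ℤ) = (k : ℤ) + i - j → 0 < l → KthMem ds l (.const j))


/-!
All `n` constants `1, …, n` occur among the `m` members of `cs`, so `n ≤ m`, while unifying
`cs` with a closed list of length `n` forces `m ≤ n`. Hence the members of `cs` are exactly
these constants, in some order, and a unifier can only close the list by sending the
open-list variable to `[]`.
-/

lemma Tm.subst_foldr_cons (σ : ℕ → Tm) (l : List Tm) (t : Tm) :
    (l.foldr .cons t).subst σ = (l.map (Tm.subst σ)).foldr .cons (t.subst σ) := by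
  induction l with
  | nil => rfl
  | cons a l ih => simp [Tm.subst, ih]

lemma Tm.subst_mkOpen (σ : ℕ → Tm) (l : List Tm) (v : ℕ) :
    (mkOpen l v).subst σ = (l.map (Tm.subst σ)).foldr .cons (σ v) :=
  Tm.subst_foldr_cons σ l _

lemma Tm.subst_mkList (σ : ℕ → Tm) (l : List Tm) :
    (mkList l).subst σ = mkList (l.map (Tm.subst σ)) :=
  Tm.subst_foldr_cons σ l _

lemma Tm.map_subst_map_const (σ : ℕ → Tm) (q : List ℕ) :
    (q.map Tm.const).map (Tm.subst σ) = q.map Tm.const := by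
  simp [Function.comp_def, Tm.subst]

lemma foldr_cons_eq_mkList_iff {l₁ l₂ : List Tm} {t : Tm} :
    l₁.foldr .cons t = mkList l₂ ↔ ∃ l₃, l₂ = l₁ ++ l₃ ∧ t = mkList l₃ := by
  induction l₁ generalizing l₂ with
  | nil => simp
  | cons a l₁ ih =>
    cases l₂ with
    | nil => simp [mkList]
    | cons b l₂ =>
      rw [List.foldr_cons, mkList, List.foldr_cons, Tm.cons.injEq, ← mkList, ih]
      simp [and_assoc, eq_comm]

section Unifier

variable {ts us : List Tm} {v : ℕ} {σ : ℕ → Tm}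

lemma IsUnifier.exists_subst_var_eq_mkList (h : IsUnifier (mkOpen ts v) (mkList us) σ) :
    ∃ l, us.map (Tm.subst σ) = ts.map (Tm.subst σ) ++ l ∧ σ v = mkList l := by
  rw [IsUnifier, Tm.subst_mkOpen, Tm.subst_mkList] at h
  exact foldr_cons_eq_mkList_iff.mp h

lemma IsUnifier.length_le (h : IsUnifier (mkOpen ts v) (mkList us) σ) :
    ts.length ≤ us.length := by
  obtain ⟨l, hl, -⟩ := h.exists_subst_var_eq_mkList
  have := congrArg List.length hl
  simp only [List.length_map, List.length_append] at this
  omega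

lemma IsUnifier.subst_mkOpen_eq_mkList (h : IsUnifier (mkOpen ts v) (mkList us) σ)
    (hlen : ts.length = us.length) :
    (mkOpen ts v).subst σ = mkList (ts.map (Tm.subst σ)) := by
  obtain ⟨l, hl, hv⟩ := h.exists_subst_var_eq_mkList
  have hnil : l = [] := by simpa [hlen] using congrArg List.length hl
  rw [Tm.subst_mkOpen, hv, hnil]
  rfl

end Unifier

lemma mem_of_kthMem_mkOpen {ts : List Tm} {v k : ℕ} {s : Tm}
    (h : KthMem (mkOpen ts v) k s) : s ∈ ts := by
  induction ts generalizing k with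
  | nil => cases h
  | cons a ts ih =>
    cases h with
    | head => exact List.mem_cons_self
    | tail _ h => exact List.mem_cons_of_mem _ (ih h)

lemma CorrectUpTo.subperm {ts : List Tm} {v n : ℕ} (hc : CorrectUpTo (mkOpen ts v) n) :
    ((List.range' 1 n).map Tm.const).Subperm ts := by
  refine ((List.nodup_range' 1 Nat.one_pos).map fun _ _ => Tm.const.inj).subperm ?_
  intro t ht
  obtain ⟨j, hj, rfl⟩ := List.mem_map.mp ht
  rw [List.mem_range'_1] at hj
  obtain ⟨k, hk⟩ := hc.2.1 j hj.1 (by omega)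
  exact mem_of_kthMem_mkOpen hk

theorem unify_with_var_list_general (ts : List Tm) (v : ℕ) (m n : ℕ)
    (hm : ts.length = m) (hc : CorrectUpTo (mkOpen ts v) n)
    (f : Fin n → ℕ)
    (hunif : ∃ σ, IsUnifier (mkOpen ts v) (mkList (List.ofFn fun a => Tm.var (f a))) σ) :
    m = n ∧
    ∀ θ, IsMGU (mkOpen ts v) (mkList (List.ofFn fun a => Tm.var (f a))) θ →
      ∃ q : List ℕ, q.Perm (List.range' 1 n) ∧
        (mkOpen ts v).subst θ = mkList (q.map Tm.const) := by
  obtain ⟨σ, hσ⟩ := hunif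
  have hle : ts.length ≤ n := by simpa using hσ.length_le
  have hperm : ts.Perm ((List.range' 1 n).map Tm.const) :=
    (hc.subperm.perm_of_length_le (by simpa using hle)).symm
  obtain ⟨q, rfl, hq⟩ := (congrFun₂ (List.eq_map_comp_perm Tm.const) _ _).mpr hperm
  have hlen : (q.map Tm.const).length = n := by simp [hq.length_eq]
  refine ⟨hm ▸ hlen, fun θ hθ => ⟨q, hq, ?_⟩⟩
  rw [hθ.1.subst_mkOpen_eq_mkList (by simpa using hlen), Tm.map_subst_map_const]

/-- if the open list `cs = [t₁,…,tₘ|v]` is correct up to `n`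
    and unifies with a list of `n` distinct fresh variables, then `m = n`
    and the unified instance is a list of length `n` whose members are a
    permutation of `1,…,n`. -/
theorem unify_with_var_list (ts : List Tm) (v : ℕ) (m n : ℕ)
    (hm : ts.length = m) (hc : CorrectUpTo (mkOpen ts v) n)
    (f : Fin n → ℕ) (hf : Function.Injective f)
    (hfresh : ∀ a, f a ∉ (mkOpen ts v).vars)
    (hunif : ∃ σ, IsUnifier (mkOpen ts v) (mkList (List.ofFn fun a => Tm.var (f a))) σ) :
    m = n ∧
    ∀ θ, IsMGU (mkOpen ts v) (mkList (List.ofFn fun a => Tm.var (f a))) θ →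
      ∃ q : List ℕ, q.Perm (List.range' 1 n) ∧
        (mkOpen ts v).subst θ = mkList (q.map Tm.const) :=
  unify_with_var_list_general ts v m n hm hc f hunif
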